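/- Let Ũ^ı be the algebra presented by generators B_i and invertible k̃_i (i∈I) with relations: k̃_ik̃_ℓ = k̃_ℓk̃_i; k̃_ℓB_i = v^{c_{τℓ,i}−c_{ℓ,i}}B_ik̃_ℓ; B_iB_j = B_jB_i if c_{ij}=0 and τi≠j; B_i²B_j − (v+v^{-1})B_iB_jB_i + B_jB_i² = 0 if c_{ij}=−1 and j ≠ τi ≠ i; B_{τi}B_i − B_iB_{τi} = (k̃_i − k̃_{τi})/(v−v^{-1}) if τi≠i; and B_i²B_j − (v+v^{-1})B_iB_jB_i + B_jB_i² = v k̃_i B_j if c_{ij}=−1 and τi=i. Then there exists a ℚ-algebra automorphism ψ_ı of Ũ^ı with ψ_ı(v)=v^{-1}, ψ_ı(B_i)=B_i for all i, ψ_ı(k̃_i)=k̃_{τi} if τi≠i, and ψ_ı(k̃_i)=v²k̃_i if τi=i. -/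

import Mathlib

noncomputable section

/-- The base field `ℚ(v)`. -/
abbrev kk : Type := RatFunc ℚ

/-- The indeterminate `v`. -/
noncomputable def v : kk := RatFunc.X

/-- Generators of the universal `ı`quantum group `Ũ^ı`. -/
inductive GenI (I : Type) : Type
  | B : I → GenI I
  | k : I → GenI I
  | ki : I → GenI I

variable {I : Type} [Fintype I] [DecidableEq I]

noncomputable def gi (x : GenI I) : FreeAlgebra kk (GenI I) := FreeAlgebra.ι kk x

/-- Defining relations of the universal `ı`quantum group `Ũ^ı` attached to the symmetric
GCM `c` of type ADE with involution `τ`. -/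
inductive RelI (c : I → I → ℤ) (τ : I → I) :
    FreeAlgebra kk (GenI I) → FreeAlgebra kk (GenI I) → Prop
  | kki (i : I) : RelI c τ (gi (GenI.k i) * gi (GenI.ki i)) 1
  | kik (i : I) : RelI c τ (gi (GenI.ki i) * gi (GenI.k i)) 1
  | kcomm (i j : I) : RelI c τ (gi (GenI.k i) * gi (GenI.k j)) (gi (GenI.k j) * gi (GenI.k i))
  | kB (l i : I) : RelI c τ (gi (GenI.k l) * gi (GenI.B i))
      ((v ^ (c (τ l) i - c l i)) • (gi (GenI.B i) * gi (GenI.k l)))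
  | BB (i j : I) (h1 : c i j = 0) (h2 : τ i ≠ j) :
      RelI c τ (gi (GenI.B i) * gi (GenI.B j)) (gi (GenI.B j) * gi (GenI.B i))
  | serre (i j : I) (h1 : c i j = -1) (h2 : j ≠ τ i) (h3 : τ i ≠ i) :
      RelI c τ (gi (GenI.B i) * gi (GenI.B i) * gi (GenI.B j)
        - (v + v⁻¹) • (gi (GenI.B i) * gi (GenI.B j) * gi (GenI.B i))
        + gi (GenI.B j) * (gi (GenI.B i) * gi (GenI.B i))) 0
  | pair (i : I) (hne : τ i ≠ i) :
      RelI c τ (gi (GenI.B (τ i)) * gi (GenI.B i) - gi (GenI.B i) * gi (GenI.B (τ i)))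
        (((v - v⁻¹)⁻¹) • (gi (GenI.k i) - gi (GenI.k (τ i))))
  | serreSplit (i j : I) (h1 : c i j = -1) (h2 : τ i = i) :
      RelI c τ (gi (GenI.B i) * gi (GenI.B i) * gi (GenI.B j)
        - (v + v⁻¹) • (gi (GenI.B i) * gi (GenI.B j) * gi (GenI.B i))
        + gi (GenI.B j) * (gi (GenI.B i) * gi (GenI.B i)))
        (v • (gi (GenI.k i) * gi (GenI.B j)))

/-- The universal `ı`quantum group `Ũ^ı`, presented by generators and relations. -/
abbrev UiAlg (c : I → I → ℤ) (τ : I → I) : Type := RingQuot (RelI c τ)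

noncomputable def UB (c : I → I → ℤ) (τ : I → I) (i : I) : UiAlg c τ :=
  RingQuot.mkAlgHom kk (RelI c τ) (gi (GenI.B i))
noncomputable def Uk (c : I → I → ℤ) (τ : I → I) (i : I) : UiAlg c τ :=
  RingQuot.mkAlgHom kk (RelI c τ) (gi (GenI.k i))
noncomputable def Uki (c : I → I → ℤ) (τ : I → I) (i : I) : UiAlg c τ :=
  RingQuot.mkAlgHom kk (RelI c τ) (gi (GenI.ki i))

/-!
The bar map is the `v ↦ v⁻¹`-semilinear ring endomorphism of the free algebra sending `B_i ↦ B_i`,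
`k̃_i ↦ k̃_{τi}` (resp. `v²k̃_i`) and `k̃_i⁻¹` to the inverse of that. It respects every defining
relation: the Serre coefficient `v + v⁻¹` is bar-invariant, the sign change of `(v - v⁻¹)⁻¹` in
the relation for `B_{τi}B_i - B_iB_{τi}` is absorbed by swapping `k̃_i` and `k̃_{τi}`, and in the
split Serre relation `v̄ · v²k̃_i = v k̃_i`. It therefore descends to `Ũ^ı`, and its square is a
`ℚ(v)`-linear map fixing the generators, hence the identity.
-/

namespace RatFunc

variable {K : Type*} [CommRing K] [IsDomain K]

theorem transcendental_X_inv : Transcendental K (X⁻¹ : K⟮X⟯) :=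
  fun h => transcendental_X (IsAlgebraic.inv_iff.mp h)

variable (K) in
def invX : K⟮X⟯ →ₐ[K] K⟮X⟯ :=
  IsFractionRing.liftAlgHom (K := K⟮X⟯) (transcendental_iff_injective.mp transcendental_X_inv)

theorem invX_algebraMap (p : Polynomial K) :
    invX K (algebraMap _ _ p) = Polynomial.aeval (X⁻¹ : K⟮X⟯) p :=
  IsFractionRing.lift_algebraMap (transcendental_iff_injective.mp transcendental_X_inv) p

@[simp] theorem invX_X : invX K X = X⁻¹ := by
  rw [← algebraMap_X, invX_algebraMap, Polynomial.aeval_X, algebraMap_X]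

theorem invX_invX (f : K⟮X⟯) : invX K (invX K f) = f := by
  suffices h : ((invX K).comp (invX K) : K⟮X⟯ →+* K⟮X⟯) = RingHom.id _ from
    RingHom.congr_fun h f
  refine IsFractionRing.ringHom_ext (A := Polynomial K) fun p => ?_
  have : ((invX K).comp (invX K)).comp (IsScalarTower.toAlgHom K (Polynomial K) _) =
      IsScalarTower.toAlgHom K (Polynomial K) _ :=
    Polynomial.algHom_ext (by simp)
  exact AlgHom.congr_fun this p

end RatFunc

/-- `A` with `r : R` acting as `σ r`, so that `σ`-semilinear maps out of `R`-algebras into `A`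
become `R`-algebra maps. -/
def TwistedAlgebra {R : Type*} [CommSemiring R] (_σ : R →+* R) (A : Type*) : Type _ := A

namespace TwistedAlgebra

variable {R A : Type*} [CommSemiring R] [Semiring A] [Algebra R A] (σ : R →+* R)

instance : Semiring (TwistedAlgebra σ A) := ‹Semiring A›

instance : Algebra R (TwistedAlgebra σ A) := Algebra.compHom A σ

end TwistedAlgebra

namespace FreeAlgebra

variable {R X A : Type*} [CommSemiring R] [Semiring A] [Algebra R A] (σ : R →+* R) (f : X → A)

def liftSemilinear : FreeAlgebra R X →+* A :=
  (lift R (A := TwistedAlgebra σ A) f).toRingHom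

@[simp] theorem liftSemilinear_ι (x : X) : liftSemilinear σ f (ι R x) = f x :=
  lift_ι_apply (A := TwistedAlgebra σ A) f x

@[simp] theorem liftSemilinear_algebraMap (r : R) :
    liftSemilinear σ f (algebraMap R _ r) = algebraMap R A (σ r) :=
  (lift R (A := TwistedAlgebra σ A) f).commutes r

@[simp] theorem liftSemilinear_smul (r : R) (a : FreeAlgebra R X) :
    liftSemilinear σ f (r • a) = σ r • liftSemilinear σ f a := by
  rw [Algebra.smul_def, map_mul, liftSemilinear_algebraMap, ← Algebra.smul_def]

theorem ringHom_ext {B : Type*} [Semiring B] {g h : FreeAlgebra R X →+* B}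
    (halg : ∀ r, g (algebraMap R _ r) = h (algebraMap R _ r))
    (hι : ∀ x, g (ι R x) = h (ι R x)) :
    g = h := by
  ext a
  induction a with
  | grade0 r => exact halg r
  | grade1 x => exact hι x
  | mul a b ha hb => rw [map_mul, map_mul, ha, hb]
  | add a b ha hb => rw [map_add, map_add, ha, hb]

end FreeAlgebra

theorem v_ne_zero : v ≠ 0 := RatFunc.X_ne_zero

theorem invX_v : RatFunc.invX ℚ v = v⁻¹ := RatFunc.invX_X

theorem invX_v_zpow (e : ℤ) : RatFunc.invX ℚ (v ^ e) = v ^ (-e) := by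
  rw [map_zpow₀, invX_v, inv_zpow, zpow_neg]

theorem invX_v_add_v_inv : RatFunc.invX ℚ (v + v⁻¹) = v + v⁻¹ := by
  rw [map_add, map_inv₀, invX_v, inv_inv, add_comm]

theorem invX_v_sub_v_inv_inv : RatFunc.invX ℚ (v - v⁻¹)⁻¹ = -(v - v⁻¹)⁻¹ := by
  rw [map_inv₀, map_sub, map_inv₀, invX_v, inv_inv, ← neg_sub, inv_neg]

namespace UiAlg

section Relations

variable {I : Type} (c : I → I → ℤ) (τ : I → I)

@[simp] theorem mkAlgHom_gi_B (i : I) :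
    RingQuot.mkAlgHom kk (RelI c τ) (gi (.B i)) = UB c τ i := rfl

@[simp] theorem mkAlgHom_gi_k (i : I) :
    RingQuot.mkAlgHom kk (RelI c τ) (gi (.k i)) = Uk c τ i := rfl

@[simp] theorem mkAlgHom_gi_ki (i : I) :
    RingQuot.mkAlgHom kk (RelI c τ) (gi (.ki i)) = Uki c τ i := rfl

theorem Uk_mul_Uki (i : I) : Uk c τ i * Uki c τ i = 1 := by
  simpa using RingQuot.mkAlgHom_rel kk (RelI.kki (c := c) (τ := τ) i)

theorem Uki_mul_Uk (i : I) : Uki c τ i * Uk c τ i = 1 := by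
  simpa using RingQuot.mkAlgHom_rel kk (RelI.kik (c := c) (τ := τ) i)

theorem Uk_commute (i j : I) : Commute (Uk c τ i) (Uk c τ j) := by
  simpa [Commute, SemiconjBy] using RingQuot.mkAlgHom_rel kk (RelI.kcomm (c := c) (τ := τ) i j)

theorem Uk_mul_UB (l i : I) :
    Uk c τ l * UB c τ i = (v ^ (c (τ l) i - c l i)) • (UB c τ i * Uk c τ l) := by
  simpa using RingQuot.mkAlgHom_rel kk (RelI.kB (c := c) (τ := τ) l i)

theorem UB_commute {i j : I} (h1 : c i j = 0) (h2 : τ i ≠ j) :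
    Commute (UB c τ i) (UB c τ j) := by
  simpa [Commute, SemiconjBy] using RingQuot.mkAlgHom_rel kk (RelI.BB (c := c) (τ := τ) i j h1 h2)

theorem UB_serre {i j : I} (h1 : c i j = -1) (h2 : j ≠ τ i) (h3 : τ i ≠ i) :
    UB c τ i * UB c τ i * UB c τ j - (v + v⁻¹) • (UB c τ i * UB c τ j * UB c τ i)
      + UB c τ j * (UB c τ i * UB c τ i) = 0 := by
  simpa using RingQuot.mkAlgHom_rel kk (RelI.serre (c := c) (τ := τ) i j h1 h2 h3)

theorem UB_pair {i : I} (h : τ i ≠ i) :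
    UB c τ (τ i) * UB c τ i - UB c τ i * UB c τ (τ i)
      = (v - v⁻¹)⁻¹ • (Uk c τ i - Uk c τ (τ i)) := by
  simpa using RingQuot.mkAlgHom_rel kk (RelI.pair (c := c) (τ := τ) i h)

theorem UB_serre_split {i j : I} (h1 : c i j = -1) (h2 : τ i = i) :
    UB c τ i * UB c τ i * UB c τ j - (v + v⁻¹) • (UB c τ i * UB c τ j * UB c τ i)
      + UB c τ j * (UB c τ i * UB c τ i) = v • (Uk c τ i * UB c τ j) := by
  simpa using RingQuot.mkAlgHom_rel kk (RelI.serreSplit (c := c) (τ := τ) i j h1 h2)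

end Relations

section Bar

variable {I : Type} [DecidableEq I] (c : I → I → ℤ) (τ : I → I)

def barGen : GenI I → UiAlg c τ
  | .B i => UB c τ i
  | .k i => if τ i = i then (v ^ 2 : kk) • Uk c τ i else Uk c τ (τ i)
  | .ki i => if τ i = i then (v ^ 2 : kk)⁻¹ • Uki c τ i else Uki c τ (τ i)

def barFree : FreeAlgebra kk (GenI I) →+* UiAlg c τ :=
  FreeAlgebra.liftSemilinear (RatFunc.invX ℚ : kk →+* kk) (barGen c τ)

@[simp] theorem barFree_gi (x : GenI I) : barFree c τ (gi x) = barGen c τ x :=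
  FreeAlgebra.liftSemilinear_ι _ _ x

@[simp] theorem barFree_smul (a : kk) (x : FreeAlgebra kk (GenI I)) :
    barFree c τ (a • x) = RatFunc.invX ℚ a • barFree c τ x :=
  FreeAlgebra.liftSemilinear_smul _ _ a x

theorem barFree_eq_of_rel (hτ : ∀ i, τ (τ i) = i) {x y : FreeAlgebra kk (GenI I)}
    (h : RelI c τ x y) : barFree c τ x = barFree c τ y := by
  induction h with
  | kki i => by_cases h : τ i = i <;> simp [barGen, h, Uk_mul_Uki, v_ne_zero]
  | kik i => by_cases h : τ i = i <;> simp [barGen, h, Uki_mul_Uk, v_ne_zero]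
  | kcomm i j =>
    simp only [map_mul, barFree_gi, barGen]
    split_ifs <;> simp only [smul_mul_assoc, mul_smul_comm, (Uk_commute c τ _ _).eq]
  | kB l i =>
    simp only [map_mul, barFree_smul, barFree_gi, barGen, invX_v_zpow]
    split_ifs with h
    · simp [h, Uk_mul_UB]
    · rw [Uk_mul_UB, hτ, ← neg_sub]
  | BB i j h1 h2 => simpa [barGen] using (UB_commute c τ h1 h2).eq
  | serre i j h1 h2 h3 =>
    simpa only [map_add (barFree c τ), map_sub (barFree c τ), map_mul (barFree c τ), map_zero,
      barFree_smul, barFree_gi, barGen, invX_v_add_v_inv] using UB_serre c τ h1 h2 h3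
  | pair i h =>
    have h' : τ (τ i) ≠ τ i := by rwa [hτ, ne_comm]
    simp only [map_sub (barFree c τ), map_mul (barFree c τ), barFree_smul, barFree_gi, barGen,
      if_neg h, if_neg h', invX_v_sub_v_inv_inv]
    rw [hτ, UB_pair c τ h]
    simp only [neg_smul, smul_sub]
    abel
  | serreSplit i j h1 h2 =>
    simp only [map_add (barFree c τ), map_sub (barFree c τ), map_mul (barFree c τ), barFree_smul,
      barFree_gi, barGen, invX_v_add_v_inv, UB_serre_split c τ h1 h2, if_pos h2, invX_v,
      smul_mul_assoc, smul_smul]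
    field_simp

variable (hτ : ∀ i, τ (τ i) = i)

def bar : UiAlg c τ →+* UiAlg c τ :=
  RingQuot.lift ⟨barFree c τ, fun _ _ h => barFree_eq_of_rel c τ hτ h⟩

theorem bar_mk (x : FreeAlgebra kk (GenI I)) :
    bar c τ hτ (RingQuot.mkAlgHom kk (RelI c τ) x) = barFree c τ x :=
  (congrArg _ (RingHom.congr_fun (RingQuot.mkAlgHom_coe kk (RelI c τ)) x)).trans
    (RingQuot.lift_mkRingHom_apply _ _ x)

theorem bar_algebraMap (a : kk) :
    bar c τ hτ (algebraMap kk _ a) = algebraMap kk _ (RatFunc.invX ℚ a) := by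
  rw [← (RingQuot.mkAlgHom kk (RelI c τ)).commutes, bar_mk]
  exact FreeAlgebra.liftSemilinear_algebraMap _ _ a

theorem bar_smul (a : kk) (x : UiAlg c τ) :
    bar c τ hτ (a • x) = RatFunc.invX ℚ a • bar c τ hτ x := by
  rw [Algebra.smul_def, map_mul, bar_algebraMap, ← Algebra.smul_def]

theorem bar_mk_gi (x : GenI I) :
    bar c τ hτ (RingQuot.mkAlgHom kk (RelI c τ) (gi x)) = barGen c τ x := by
  rw [bar_mk, barFree_gi]

theorem bar_UB (i : I) : bar c τ hτ (UB c τ i) = UB c τ i := bar_mk_gi c τ hτ (.B i)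

theorem bar_Uk (i : I) :
    bar c τ hτ (Uk c τ i) = if τ i = i then (v ^ 2 : kk) • Uk c τ i else Uk c τ (τ i) :=
  bar_mk_gi c τ hτ (.k i)

theorem bar_Uki (i : I) :
    bar c τ hτ (Uki c τ i) =
      if τ i = i then (v ^ 2 : kk)⁻¹ • Uki c τ i else Uki c τ (τ i) :=
  bar_mk_gi c τ hτ (.ki i)

theorem bar_barGen (x : GenI I) :
    bar c τ hτ (barGen c τ x) = RingQuot.mkAlgHom kk (RelI c τ) (gi x) := by
  cases x with
  | B i => exact bar_UB c τ hτ i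
  | k i =>
    by_cases h : τ i = i
    · simp [barGen, h, bar_smul, bar_Uk, invX_v, smul_smul, v_ne_zero]
    · simp [barGen, h, Ne.symm h, bar_Uk, hτ]
  | ki i =>
    by_cases h : τ i = i
    · simp [barGen, h, bar_smul, bar_Uki, invX_v, smul_smul, v_ne_zero]
    · simp [barGen, h, Ne.symm h, bar_Uki, hτ]

theorem bar_bar (x : UiAlg c τ) : bar c τ hτ (bar c τ hτ x) = x := by
  suffices h : (bar c τ hτ).comp (bar c τ hτ) = RingHom.id _ from RingHom.congr_fun h x
  refine RingQuot.ringQuot_ext _ _ (FreeAlgebra.ringHom_ext (fun a => ?_) (fun x => ?_))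
  all_goals simp only [RingHom.comp_apply, RingHom.id_apply, ← RingQuot.mkAlgHom_coe kk,
    AlgHom.coe_toRingHom]
  · rw [AlgHom.commutes, bar_algebraMap, bar_algebraMap, RatFunc.invX_invX]
  · exact (congrArg _ (bar_mk_gi c τ hτ x)).trans (bar_barGen c τ hτ x)

end Bar

end UiAlg

theorem bar_involution_exists_general (c : I → I → ℤ)
    (τ : I → I) (hτ : ∀ i, τ (τ i) = i) :
    ∃ ψ : UiAlg c τ ≃+* UiAlg c τ,
      (∀ (a : ℚ) (x : UiAlg c τ), ψ ((a : kk) • x) = (a : kk) • ψ x) ∧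
      ψ (algebraMap kk (UiAlg c τ) v) = algebraMap kk (UiAlg c τ) v⁻¹ ∧
      (∀ i, ψ (UB c τ i) = UB c τ i) ∧
      (∀ i, τ i ≠ i → ψ (Uk c τ i) = Uk c τ (τ i)) ∧
      (∀ i, τ i = i → ψ (Uk c τ i) = (v ^ 2) • Uk c τ i) := by
  have hinv : (UiAlg.bar c τ hτ).comp (UiAlg.bar c τ hτ) = RingHom.id _ :=
    RingHom.ext (UiAlg.bar_bar c τ hτ)
  refine ⟨RingEquiv.ofRingHom _ _ hinv hinv, fun a x => ?_, ?_, UiAlg.bar_UB c τ hτ,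
    fun i hi => ?_, fun i hi => ?_⟩
  · exact (UiAlg.bar_smul c τ hτ a x).trans (by rw [map_ratCast]; rfl)
  · exact (UiAlg.bar_algebraMap c τ hτ v).trans (by rw [invX_v])
  · exact (UiAlg.bar_Uk c τ hτ i).trans (if_neg hi)
  · exact (UiAlg.bar_Uk c τ hτ i).trans (if_pos hi)

/-- The bar involution `ψ_ı` of `Ũ^ı`: a `ℚ`-algebra automorphism with `ψ_ı(v) = v⁻¹`,
`ψ_ı(B_i) = B_i`, `ψ_ı(k̃_i) = k̃_{τi}` if `τi ≠ i`, and `ψ_ı(k̃_i) = v²k̃_i` if `τi = i`. -/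
theorem bar_involution_exists (c : I → I → ℤ)
    (hsymm : ∀ i j, c i j = c j i) (hdiag : ∀ i, c i i = 2)
    (hoff : ∀ i j, i ≠ j → c i j = 0 ∨ c i j = -1)
    (hposdef : ∀ x : I → ℤ, x ≠ 0 → 0 < ∑ i : I, ∑ j : I, x i * c i j * x j)
    (τ : I → I) (hτ : ∀ i, τ (τ i) = i) (hcτ : ∀ i j, c (τ i) (τ j) = c i j)
    (hsplit : ∀ i, τ i ≠ i → c i (τ i) = 0) :
    ∃ ψ : UiAlg c τ ≃+* UiAlg c τ,
      (∀ (a : ℚ) (x : UiAlg c τ), ψ ((a : kk) • x) = (a : kk) • ψ x) ∧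
      ψ (algebraMap kk (UiAlg c τ) v) = algebraMap kk (UiAlg c τ) v⁻¹ ∧
      (∀ i, ψ (UB c τ i) = UB c τ i) ∧
      (∀ i, τ i ≠ i → ψ (Uk c τ i) = Uk c τ (τ i)) ∧
      (∀ i, τ i = i → ψ (Uk c τ i) = (v ^ 2) • Uk c τ i) :=
  bar_involution_exists_general c τ hτ
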